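/- Let ℓ = p + [0,1]² and ℓ' = p' + [0,1]² be closed unit-square labels anchored at their lower-left corners, where p' = p + (√2, 0). Then for α ∈ [0, 2π), the rotated labels ℓ(α) and ℓ'(α) intersect if and only if α ∈ {π/4, 3π/4, 5π/4, 7π/4}. -/

import Mathlib

open Real Set

/-- Rotation of the plane about the origin by angle `α` (counterclockwise). -/
noncomputable def rot (α : ℝ) (v : ℝ × ℝ) : ℝ × ℝ :=
  (v.1 * Real.cos α - v.2 * Real.sin α, v.1 * Real.sin α + v.2 * Real.cos α)

/-- The unit-square label anchored at its lower-left corner `p`, rotated by `α` about `p`: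
`ℓ(α) = p + R_α([0,1]²)`. -/
noncomputable def unitSq (p : ℝ × ℝ) (α : ℝ) : Set (ℝ × ℝ) :=
  (fun v => p + rot α v) '' Set.Icc ((0, 0) : ℝ × ℝ) (1, 1)

/-!
Translating both labels by `-p` and rotating back by `-α`, they meet iff the offset
`w = R_{-α}(√2, 0) = (√2 cos α, -√2 sin α)` lies in `[0,1]² - [0,1]² = [-1,1]²`.
Since `|w|² = 2`, that happens iff both coordinates of `w` have square `1`,
i.e. iff `cos² α = sin² α`, i.e. iff `cos 2α = 0`.
-/

open scoped Pointwise

theorem Set.Icc_zero_sub_Icc_zero {α : Type*} [AddCommGroup α] [Lattice α]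
    [IsOrderedAddMonoid α] {c : α} (hc : 0 ≤ c) :
    Icc 0 c - Icc 0 c = Icc (-c) c := by
  ext w
  simp only [mem_sub, mem_Icc]
  constructor
  · rintro ⟨u, ⟨hu0, huc⟩, v, ⟨hv0, hvc⟩, rfl⟩
    constructor
    · calc -c = 0 - c := (zero_sub c).symm
        _ ≤ u - v := sub_le_sub hu0 hvc
    · calc u - v ≤ c - 0 := sub_le_sub huc hv0
        _ = c := sub_zero c
  · rintro ⟨hcw, hwc⟩
    refine ⟨w⁺, ⟨posPart_nonneg w, sup_le hwc hc⟩, w⁻, ⟨negPart_nonneg w, sup_le ?_ hc⟩,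
      posPart_sub_negPart w⟩
    exact neg_le.mp hcw

theorem rot_sub (α : ℝ) (u v : ℝ × ℝ) : rot α (u - v) = rot α u - rot α v := by
  ext <;> simp only [rot, Prod.fst_sub, Prod.snd_sub] <;> ring

theorem rot_neg_rot (α : ℝ) (u : ℝ × ℝ) : rot (-α) (rot α u) = u := by
  ext <;> simp only [rot, cos_neg, sin_neg]
  · linear_combination u.1 * sin_sq_add_cos_sq α
  · linear_combination u.2 * sin_sq_add_cos_sq α

theorem rot_eq_iff_eq_rot_neg {α : ℝ} {u w : ℝ × ℝ} : rot α u = w ↔ u = rot (-α) w := by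
  constructor
  · rintro rfl
    exact (rot_neg_rot α u).symm
  · rintro rfl
    simpa only [neg_neg] using rot_neg_rot (-α) w

theorem unitSq_inter_unitSq_nonempty_iff (p q : ℝ × ℝ) (α : ℝ) :
    (unitSq p α ∩ unitSq q α).Nonempty ↔ rot (-α) (q - p) ∈ Icc (-1 : ℝ × ℝ) 1 := by
  have hrot (u v : ℝ × ℝ) : p + rot α u = q + rot α v ↔ u - v = rot (-α) (q - p) := by
    rw [← rot_eq_iff_eq_rot_neg, rot_sub, sub_eq_sub_iff_add_eq_add, add_comm]
  rw [← Icc_zero_sub_Icc_zero zero_le_one]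
  simp only [unitSq, Prod.mk_zero_zero, Prod.mk_one_one, Set.Nonempty, mem_inter_iff,
    mem_image, mem_sub, ← hrot]
  constructor
  · rintro ⟨_, ⟨u, hu, rfl⟩, v, hv, huv⟩
    exact ⟨u, hu, v, hv, huv.symm⟩
  · rintro ⟨u, hu, v, hv, huv⟩
    exact ⟨_, ⟨u, hu, rfl⟩, v, hv, huv.symm⟩

theorem mk_mem_Icc_neg_one_one_iff_sq_eq_sq {x y : ℝ} (hxy : x ^ 2 + y ^ 2 = 2) :
    (x, y) ∈ Icc (-1 : ℝ × ℝ) 1 ↔ x ^ 2 = y ^ 2 := by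
  simp only [mem_Icc, Prod.le_def, Prod.fst_neg, Prod.snd_neg, Prod.fst_one, Prod.snd_one,
    and_and_and_comm, ← abs_le, ← sq_le_one_iff_abs_le_one]
  constructor
  · rintro ⟨hx, hy⟩
    linarith
  · intro h
    constructor <;> linarith

theorem cos_two_mul_eq_zero_iff_of_mem_Ico {α : ℝ} (hα : α ∈ Ico 0 (2 * π)) :
    cos (2 * α) = 0 ↔ α ∈ ({π / 4, 3 * π / 4, 5 * π / 4, 7 * π / 4} : Set ℝ) := by
  rw [cos_eq_zero_iff]
  simp only [mem_insert_iff, mem_singleton_iff]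
  constructor
  · rintro ⟨k, hk⟩
    obtain rfl : α = (2 * k + 1) * π / 4 := by linarith
    obtain ⟨h0, h2π⟩ := hα
    have hk0 : -1 < k := by
      suffices (-1 : ℝ) < k by exact_mod_cast this
      nlinarith [pi_pos]
    have hk4 : k < 4 := by
      suffices (k : ℝ) < 4 by exact_mod_cast this
      nlinarith [pi_pos]
    interval_cases k <;> norm_num
  · rintro (rfl | rfl | rfl | rfl)
    exacts [⟨0, by ring⟩, ⟨1, by ring⟩, ⟨2, by ring⟩, ⟨3, by ring⟩]

/-- For two unit-square labels anchored at lower-left corners at distance `√2` on a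
horizontal line, the rotated labels intersect at `α ∈ [0,2π)` exactly when
`α ∈ {π/4, 3π/4, 5π/4, 7π/4}`. -/
theorem unit_squares_sqrt_two_apart_conflicts (p : ℝ × ℝ) (α : ℝ)
    (hα : α ∈ Set.Ico (0 : ℝ) (2 * π)) :
    (unitSq p α ∩ unitSq (p + (Real.sqrt 2, 0)) α).Nonempty ↔
      α ∈ ({π / 4, 3 * π / 4, 5 * π / 4, 7 * π / 4} : Set ℝ) := by
  have hoffset : rot (-α) (√2, 0) = (√2 * cos α, -(√2 * sin α)) := by
    simp [rot]
  have hnorm : (√2 * cos α) ^ 2 + (-(√2 * sin α)) ^ 2 = 2 := by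
    rw [neg_sq, mul_pow, mul_pow, sq_sqrt zero_le_two]
    linear_combination 2 * cos_sq_add_sin_sq α
  rw [unitSq_inter_unitSq_nonempty_iff, add_sub_cancel_left, hoffset,
    mk_mem_Icc_neg_one_one_iff_sq_eq_sq hnorm, ← cos_two_mul_eq_zero_iff_of_mem_Ico hα,
    cos_two_mul', neg_sq, mul_pow, mul_pow, mul_right_inj' (by positivity), sub_eq_zero]
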